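/- Let (s_n)_{n∈ℕ} be nonnegative reals, N > 2, and let θ_n ∈ [0,1] with θ_n < 1 for all n outside a set A ⊆ ℕ (i.e., θ_n = 1 only allowed for n ∈ A). If Σ_n θ_n s_n^N ≥ 1 and Σ_n s_n^{N-2} ≤ 1, then there exists n₀ ∈ A with s_{n₀} = 1 and s_n = 0 for all n ≠ n₀. -/
import Mathlib


/-- weighted version of the dichotomy lemma: if `0 ≤ θ_n ≤ 1` with `θ_n < 1`
for all `n ∉ A`, `Σ θ_n s_n^N ≥ 1` and `Σ s_n^{N-2} ≤ 1` (convergent), `N > 2`, then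
there is `n₀ ∈ A` with `s_{n₀} = 1` and `s_n = 0` for `n ≠ n₀`. -/
theorem stmt_6 (N : ℕ) (hN : 2 < N) (A : Set ℕ) (s θ : ℕ → ℝ)
    (hs : ∀ n, 0 ≤ s n)
    (hθ0 : ∀ n, 0 ≤ θ n) (hθ1 : ∀ n, θ n ≤ 1)
    (hθA : ∀ n ∉ A, θ n < 1)
    (hsum : Summable (fun n => s n ^ (N - 2)))
    (h1 : 1 ≤ ∑' n, θ n * s n ^ N) (h2 : (∑' n, s n ^ (N - 2)) ≤ 1) :
    ∃ n₀ ∈ A, s n₀ = 1 ∧ ∀ n ≠ n₀, s n = 0 := by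
  have hle1 : ∀ n, s n ≤ 1 := by
    intro n
    have h := Summable.le_tsum hsum n (fun m _ => pow_nonneg (hs m) _)
    have h' : s n ^ (N - 2) ≤ 1 := h.trans h2
    exact (pow_le_one_iff_of_nonneg (hs n) (by omega)).mp h'
  have hterm : ∀ n, θ n * s n ^ N ≤ s n ^ (N - 2) := by
    intro n
    calc θ n * s n ^ N ≤ 1 * s n ^ N :=
          mul_le_mul_of_nonneg_right (hθ1 n) (pow_nonneg (hs n) _)
      _ = s n ^ N := one_mul _
      _ ≤ s n ^ (N - 2) := pow_le_pow_of_le_one (hs n) (hle1 n) (by omega)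
  have hgnn : ∀ n, 0 ≤ θ n * s n ^ N := fun n => mul_nonneg (hθ0 n) (pow_nonneg (hs n) _)
  have hgsum : Summable (fun n => θ n * s n ^ N) :=
    Summable.of_nonneg_of_le hgnn hterm hsum
  have hle : (∑' n, θ n * s n ^ N) ≤ ∑' n, s n ^ (N - 2) := Summable.tsum_le_tsum hterm hgsum hsum
  have heq : ∀ n, θ n * s n ^ N = s n ^ (N - 2) := by
    intro n
    by_contra hne
    have hlt : θ n * s n ^ N < s n ^ (N - 2) := lt_of_le_of_ne (hterm n) hne
    have : (∑' n, θ n * s n ^ N) < ∑' n, s n ^ (N - 2) := Summable.tsum_lt_tsum hterm hlt hgsum hsum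
    linarith
  have key : ∀ n, s n = 0 ∨ (s n = 1 ∧ n ∈ A) := by
    intro n
    rcases eq_or_ne (s n) 0 with h0 | h0
    · exact Or.inl h0
    · right
      have hpos : 0 < s n := (hs n).lt_of_ne (Ne.symm h0)
      have hpow : s n ^ N = s n ^ (N - 2) * s n ^ 2 := by
        rw [← pow_add]; congr 1; omega
      have hne' : (0:ℝ) < s n ^ (N - 2) := pow_pos hpos _
      have hE : θ n * s n ^ 2 = 1 := by
        have h := heq n
        rw [hpow] at h
        have : (θ n * s n ^ 2) * s n ^ (N - 2) = 1 * s n ^ (N - 2) := by ring_nf; linarith [h]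
        exact mul_right_cancel₀ (ne_of_gt hne') this
      have hs1 : s n = 1 := by nlinarith [hθ1 n, hle1 n, hs n]
      refine ⟨hs1, ?_⟩
      by_contra hA
      have := hθA n hA
      rw [hs1] at hE
      nlinarith
  have hex : ∃ n, s n ≠ 0 := by
    by_contra h
    push_neg at h
    have : (∑' n, θ n * s n ^ N) = 0 := by
      simp [h, zero_pow (show N ≠ 0 by omega)]
    linarith
  obtain ⟨n₀, hn₀⟩ := hex
  rcases key n₀ with h0 | ⟨hs1, hA⟩
  · exact absurd h0 hn₀
  refine ⟨n₀, hA, hs1, ?_⟩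
  intro n hn
  by_contra h0
  rcases key n with h | ⟨hsn1, _⟩
  · exact h0 h
  have hsum2 : ({n, n₀} : Finset ℕ).sum (fun m => s m ^ (N - 2)) ≤ ∑' m, s m ^ (N - 2) :=
    Summable.sum_le_tsum _ (fun m _ => pow_nonneg (hs m) _) hsum
  rw [Finset.sum_pair hn] at hsum2
  rw [hsn1, hs1] at hsum2
  simp at hsum2
  linarith
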